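/- Soundness of the axiom sets Φ^X_n: for every set X of formulas, every n, and every axiom sequent σ ∈ Φ^X_n, the pullback of σ under the translation τ is derivable in !^{c,w}_{t,4}MacLL with cut. In particular: (i) !A ⇒ A is derivable; (ii) !A ⇒ !A ⊗ !A is derivable when contraction C is present; (iii) !A ⇒ 1 is derivable when weakening W is present; (iv) if !A ⇒ B is derivable then !A ⇒ !B is derivable (using !R4). -/

import Mathlib

/-- Multiplicative exponential formulas: variables, unit, !, ⊗, →, ←. -/
inductive Fm : Type where
  | var : Nat → Fm
  | one : Fm
  | bang : Fm → Fm
  | tens : Fm → Fm → Fm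
  | arr : Fm → Fm → Fm      -- A → B
  | larr : Fm → Fm → Fm     -- B ← A
deriving DecidableEq

/-- Structures: binary trees of formulas, allowing the empty structure. -/
inductive Str : Type where
  | emp : Str
  | leaf : Fm → Str
  | comma : Str → Str → Str
deriving DecidableEq

/-- One-hole structure contexts. -/
inductive Ctx : Type where
  | hole : Ctx
  | commaL : Ctx → Str → Ctx
  | commaR : Str → Ctx → Ctx

/-- Plug a structure into the hole of a context. -/
def Ctx.fill : Ctx → Str → Str
  | .hole, Δ => Δ
  | .commaL c Δ, P => .comma (c.fill P) Δ
  | .commaR Γ c, P => .comma Γ (c.fill P)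

/-- !Γ : bang every leaf formula of a structure. -/
def bangStr : Str → Str
  | .emp => .emp
  | .leaf A => .leaf (.bang A)
  | .comma a b => .comma (bangStr a) (bangStr b)

/-- `StarBang Γ Γ'` : Γ' is Γ with some subset of its leaf formulas banged (!*Γ). -/
inductive StarBang : Str → Str → Prop where
  | emp : StarBang .emp .emp
  | leaf (A : Fm) : StarBang (.leaf A) (.leaf A)
  | leafBang (A : Fm) : StarBang (.leaf A) (.leaf (.bang A))
  | comma {a a' b b' : Str} : StarBang a a' → StarBang b b' →
      StarBang (.comma a b) (.comma a' b')

/-- Proper structures: nonempty binary trees of formulas (no occurrence of the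
empty structure), matching the grammar Γ ::= (Γ,Γ) | F. -/
inductive Str.proper : Str → Prop where
  | leaf (A : Fm) : (Str.leaf A).proper
  | comma {a b : Str} : a.proper → b.proper → (Str.comma a b).proper

/-- Flags selecting the optional modal/structural rules of a system. -/
structure Flags where
  bangL : Bool := false
  bangR : Bool := false
  bangRK : Bool := false
  bangR4 : Bool := false
  bangRK4 : Bool := false
  contr : Bool := false     -- single-formula contraction C
  contrK : Bool := false    -- structural contraction CK
  weak : Bool := false      -- weakening W
  cut : Bool := false

/-- Sequent derivability in MacLL extended by the rules selected by `fl`,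
with nonlogical axioms `Ax`. -/
inductive Der (fl : Flags) (Ax : Set (Str × Fm)) : Str → Fm → Prop where
  | ax {Γ : Str} {C : Fm} : (Γ, C) ∈ Ax → Der fl Ax Γ C
  | init (A : Fm) : Der fl Ax (.leaf A) A
  | tensL (Γ : Ctx) {A B C : Fm} :
      Der fl Ax (Γ.fill (.comma (.leaf A) (.leaf B))) C →
      Der fl Ax (Γ.fill (.leaf (.tens A B))) C
  | tensR {Γ Δ : Str} {A B : Fm} :
      Der fl Ax Γ A → Der fl Ax Δ B → Der fl Ax (.comma Γ Δ) (.tens A B)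
  | arrL (Γ : Ctx) {Δ : Str} {A B C : Fm} :
      Der fl Ax Δ A → Der fl Ax (Γ.fill (.leaf B)) C →
      Der fl Ax (Γ.fill (.comma Δ (.leaf (.arr A B)))) C
  | arrR {Γ : Str} {A B : Fm} :
      Der fl Ax (.comma (.leaf A) Γ) B → Der fl Ax Γ (.arr A B)
  | larrL (Γ : Ctx) {Δ : Str} {A B C : Fm} :
      Der fl Ax Δ A → Der fl Ax (Γ.fill (.leaf B)) C →
      Der fl Ax (Γ.fill (.comma (.leaf (.larr B A)) Δ)) C
  | larrR {Γ : Str} {A B : Fm} :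
      Der fl Ax (.comma Γ (.leaf A)) B → Der fl Ax Γ (.larr B A)
  | oneL (Γ : Ctx) {C : Fm} :
      Der fl Ax (Γ.fill .emp) C → Der fl Ax (Γ.fill (.leaf .one)) C
  | oneR : Der fl Ax .emp .one
  | bangL (Γ : Ctx) {A C : Fm} : fl.bangL = true →
      Der fl Ax (Γ.fill (.leaf A)) C → Der fl Ax (Γ.fill (.leaf (.bang A))) C
  | bangR {A C : Fm} : fl.bangR = true →
      Der fl Ax (.leaf A) C → Der fl Ax (.leaf (.bang A)) (.bang C)
  | bangRK {Γ : Str} {C : Fm} : fl.bangRK = true →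
      Der fl Ax Γ C → Der fl Ax (bangStr Γ) (.bang C)
  | bangR4 {A C : Fm} : fl.bangR4 = true →
      Der fl Ax (.leaf (.bang A)) C → Der fl Ax (.leaf (.bang A)) (.bang C)
  | bangRK4 {Γ Γ' : Str} {C : Fm} : fl.bangRK4 = true →
      StarBang Γ Γ' → Der fl Ax Γ' C → Der fl Ax (bangStr Γ) (.bang C)
  | contr (Γ : Ctx) {A : Fm} {C : Fm} : fl.contr = true →
      Der fl Ax (Γ.fill (.comma (.leaf (.bang A)) (.leaf (.bang A)))) C →
      Der fl Ax (Γ.fill (.leaf (.bang A))) C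
  | contrK (Γ : Ctx) {Δ : Str} {C : Fm} : fl.contrK = true → Δ.proper →
      Der fl Ax (Γ.fill (.comma (bangStr Δ) (bangStr Δ))) C →
      Der fl Ax (Γ.fill (bangStr Δ)) C
  | weak (Γ : Ctx) {A C : Fm} : fl.weak = true →
      Der fl Ax (Γ.fill .emp) C → Der fl Ax (Γ.fill (.leaf (.bang A))) C
  | cut (Γ : Ctx) {Δ : Str} {A C : Fm} : fl.cut = true →
      Der fl Ax Δ A → Der fl Ax (Γ.fill (.leaf A)) C →
      Der fl Ax (Γ.fill Δ) C

/-- Plain MacLL (no modal or structural rules, no cut). -/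
def macll : Flags := {}
/-- Translation τ into !-free formulas: τ(p_i)=p_{2i+1}, τ(!A)=p_{2⌈A⌉}. -/
def tau (enc : Fm → Nat) : Fm → Fm
  | .var i => .var (2 * i + 1)
  | .one => .one
  | .bang A => .var (2 * enc A)
  | .tens A B => .tens (tau enc A) (tau enc B)
  | .arr A B => .arr (tau enc A) (tau enc B)
  | .larr A B => .larr (tau enc A) (tau enc B)

/-- Leafwise extension of τ to structures. -/
def tauStr (enc : Fm → Nat) : Str → Str
  | .emp => .emp
  | .leaf A => .leaf (tau enc A)
  | .comma a b => .comma (tauStr enc a) (tauStr enc b)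

/-- The set of propositional variables of a formula. -/
def Fm.vars : Fm → Set Nat
  | .var i => {i}
  | .one => ∅
  | .bang A => A.vars
  | .tens A B => A.vars ∪ B.vars
  | .arr A B => A.vars ∪ B.vars
  | .larr A B => A.vars ∪ B.vars

def Str.vars : Str → Set Nat
  | .emp => ∅
  | .leaf A => A.vars
  | .comma a b => a.vars ∪ b.vars

/-- Subformulas of a formula. -/
def Fm.sub : Fm → Set Fm
  | .var i => {.var i}
  | .one => {.one}
  | .bang A => insert (.bang A) A.sub
  | .tens A B => insert (.tens A B) (A.sub ∪ B.sub)
  | .arr A B => insert (.arr A B) (A.sub ∪ B.sub)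
  | .larr A B => insert (.larr A B) (A.sub ∪ B.sub)

/-- The yield of a structure: the set of formulas occurring in it. -/
def Str.fms : Str → Set Fm
  | .emp => ∅
  | .leaf A => {A}
  | .comma a b => a.fms ∪ b.fms

/-- !-free formulas. -/
def Fm.bangFree : Fm → Prop
  | .var _ => True
  | .one => True
  | .bang _ => False
  | .tens A B => A.bangFree ∧ B.bangFree
  | .arr A B => A.bangFree ∧ B.bangFree
  | .larr A B => A.bangFree ∧ B.bangFree

def Str.bangFree : Str → Prop
  | .emp => True
  | .leaf A => A.bangFree
  | .comma a b => a.bangFree ∧ b.bangFree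

/-- The flags of the cut-free system !^S_M MacLL, for S ⊆ {c,w} and M ⊆ {k,t,4}
given by Booleans c, w, k, t, f4. -/
def sysFlags (c w k t f4 : Bool) : Flags where
  bangL := t
  bangR := !k && !f4
  bangRK := k && !f4
  bangR4 := !k && f4
  bangRK4 := k && f4
  contr := c && !k
  contrK := c && k
  weak := w
  cut := false

/-- MacLL with cut (used with nonlogical axioms). -/
def macllCut : Flags := { cut := true }

/-- The axiom sets Φ^X_n for the light system with t, 4, c, w: Φ^X_{n+1} adds
p_{2⌈A⌉} ⇒ p_{2⌈B⌉} whenever MacLL+Φ^X_n proves p_{2⌈A⌉} ⇒ τ(B). -/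
def Phi (enc : Fm → Nat) (X : Set Fm) : Nat → Set (Str × Fm)
  | 0 => {s | ∃ A, Fm.bang A ∈ X ∧
      (s = (Str.leaf (Fm.var (2 * enc A)), tau enc A) ∨
       s = (Str.leaf (Fm.var (2 * enc A)),
            Fm.tens (Fm.var (2 * enc A)) (Fm.var (2 * enc A))) ∨
       s = (Str.leaf (Fm.var (2 * enc A)), Fm.one))}
  | n + 1 => Phi enc X n ∪ {s | ∃ A B, Fm.bang A ∈ X ∧ Fm.bang B ∈ X ∧
      s = (Str.leaf (Fm.var (2 * enc A)), Fm.var (2 * enc B)) ∧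
      Der macllCut (Phi enc X n) (Str.leaf (Fm.var (2 * enc A))) (tau enc B)}

/-- !^{c,w}_{t,4}MacLL with cut. -/
def sys8 : Flags :=
  { bangL := true, bangR4 := true, contr := true, weak := true, cut := true }

/-!
Since `enc` is injective, τ has a left inverse that is itself a substitution, namely
p_{2i+1} ↦ p_i and p_{2⌈A⌉} ↦ !A. Substituting into a derivation of MacLL with cut
from nonlogical axioms yields a derivation of !^{c,w}_{t,4}MacLL with cut as soon as
every substituted axiom is derivable there. For the axioms of Φ^X_0 these are instances
of dereliction, contraction and weakening; for a new axiom p_{2⌈A⌉} ⇒ p_{2⌈B⌉} of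
Φ^X_{n+1}, induction on n turns its MacLL+Φ^X_n derivation into one of !A ⇒ B, and
!R4 finishes.
-/

def Fm.subst (s : Nat → Fm) : Fm → Fm
  | .var i => s i
  | .one => .one
  | .bang A => .bang (A.subst s)
  | .tens A B => .tens (A.subst s) (B.subst s)
  | .arr A B => .arr (A.subst s) (B.subst s)
  | .larr A B => .larr (A.subst s) (B.subst s)

def Str.subst (s : Nat → Fm) : Str → Str
  | .emp => .emp
  | .leaf A => .leaf (A.subst s)
  | .comma a b => .comma (a.subst s) (b.subst s)

def Ctx.subst (s : Nat → Fm) : Ctx → Ctx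
  | .hole => .hole
  | .commaL c Δ => .commaL (c.subst s) (Δ.subst s)
  | .commaR Γ c => .commaR (Γ.subst s) (c.subst s)

theorem Str.subst_fill (s : Nat → Fm) (c : Ctx) (Δ : Str) :
    (c.fill Δ).subst s = (c.subst s).fill (Δ.subst s) := by
  induction c <;> simp [Ctx.fill, Str.subst, Ctx.subst, *]

theorem Fm.subst_tau {enc : Fm → Nat} {s : Nat → Fm} (hodd : ∀ i, s (2 * i + 1) = .var i)
    (heven : ∀ A, s (2 * enc A) = .bang A) (F : Fm) : (tau enc F).subst s = F := by
  induction F <;> simp [tau, Fm.subst, *]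

theorem Str.subst_tauStr {enc : Fm → Nat} {s : Nat → Fm} (hodd : ∀ i, s (2 * i + 1) = .var i)
    (heven : ∀ A, s (2 * enc A) = .bang A) (Γ : Str) : (tauStr enc Γ).subst s = Γ := by
  induction Γ <;> simp [tauStr, Str.subst, Fm.subst_tau hodd heven, *]

instance : Nonempty Fm := ⟨.one⟩

noncomputable def untau (enc : Fm → Nat) (n : Nat) : Fm :=
  if n % 2 = 1 then .var (n / 2) else .bang (Function.invFun enc (n / 2))

theorem untau_odd (enc : Fm → Nat) (i : Nat) : untau enc (2 * i + 1) = .var i := by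
  rw [untau, if_pos (by omega)]
  congr 1
  omega

theorem untau_even {enc : Fm → Nat} (henc : Function.Injective enc) (A : Fm) :
    untau enc (2 * enc A) = .bang A := by
  rw [untau, if_neg (by omega), Nat.mul_div_cancel_left _ two_pos,
    Function.leftInverse_invFun henc A]

theorem Der.subst {fl : Flags} (hcut : fl.cut = true) {Ax Ax' : Set (Str × Fm)}
    {s : Nat → Fm} (hAx : ∀ Γ C, (Γ, C) ∈ Ax → Der fl Ax' (Γ.subst s) (C.subst s))
    {Γ : Str} {C : Fm} (h : Der macllCut Ax Γ C) : Der fl Ax' (Γ.subst s) (C.subst s) := by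
  induction h with
  | ax h => exact hAx _ _ h
  | init A => exact .init _
  | tensL c _ ih =>
      rw [Str.subst_fill] at ih ⊢
      exact .tensL _ ih
  | tensR _ _ ih₁ ih₂ => exact .tensR ih₁ ih₂
  | arrL c _ _ ih₁ ih₂ =>
      rw [Str.subst_fill] at ih₂ ⊢
      exact .arrL _ ih₁ ih₂
  | arrR _ ih => exact .arrR ih
  | larrL c _ _ ih₁ ih₂ =>
      rw [Str.subst_fill] at ih₂ ⊢
      exact .larrL _ ih₁ ih₂
  | larrR _ ih => exact .larrR ih
  | oneL c _ ih =>
      rw [Str.subst_fill] at ih ⊢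
      exact .oneL _ ih
  | oneR => exact .oneR
  | cut c _ _ _ ih₁ ih₂ =>
      rw [Str.subst_fill] at ih₂ ⊢
      exact .cut _ hcut ih₁ ih₂
  | bangL _ hfl | bangR hfl | bangRK hfl | bangR4 hfl | bangRK4 hfl | contr _ hfl
  | contrK _ hfl | weak _ hfl => cases hfl

section BangRules

variable {fl : Flags} {Ax : Set (Str × Fm)}

theorem Der.bang_self (h : fl.bangL = true) (A : Fm) : Der fl Ax (.leaf (.bang A)) A :=
  .bangL .hole h (.init A)

theorem Der.bang_tens_bang (h : fl.contr = true) (A : Fm) :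
    Der fl Ax (.leaf (.bang A)) (.tens (.bang A) (.bang A)) :=
  .contr .hole h (.tensR (.init _) (.init _))

theorem Der.bang_one (h : fl.weak = true) (A : Fm) : Der fl Ax (.leaf (.bang A)) .one :=
  .weak .hole h .oneR

end BangRules

theorem der_untau_of_mem_phi {enc : Fm → Nat} (henc : Function.Injective enc) (X : Set Fm) (n : Nat)
    (Γ : Str) (C : Fm) (hmem : (Γ, C) ∈ Phi enc X n) :
    Der sys8 ∅ (Γ.subst (untau enc)) (C.subst (untau enc)) := by
  induction n generalizing Γ C with
  | zero =>
      obtain ⟨A, -, h | h | h⟩ := hmem <;> obtain ⟨rfl, rfl⟩ := Prod.mk.inj h <;>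
        simp only [Str.subst, Fm.subst, untau_even henc, Fm.subst_tau (untau_odd enc)
          (untau_even henc)]
      · exact .bang_self rfl A
      · exact .bang_tens_bang rfl A
      · exact .bang_one rfl A
  | succ n ih =>
      obtain h | ⟨A, B, -, -, h, hder⟩ := hmem
      · exact ih Γ C h
      obtain ⟨rfl, rfl⟩ := Prod.mk.inj h
      have hB := Der.subst rfl ih hder
      simp only [Str.subst, Fm.subst, untau_even henc,
        Fm.subst_tau (untau_odd enc) (untau_even henc)] at hB ⊢
      exact .bangR4 rfl hB

/-- Soundness of the axioms Φ^X_n: every axiom pulls back under τ to a sequent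
derivable in !^{c,w}_{t,4}MacLL with cut; in particular !A ⇒ A, !A ⇒ !A ⊗ !A,
!A ⇒ 1 are derivable, and !A ⇒ B derivable implies !A ⇒ !B derivable. -/
theorem stmt8 (enc : Fm → Nat) (henc : Function.Injective enc) :
    (∀ (X : Set Fm) (n : Nat) (Γ₀ : Str) (C₀ : Fm),
        (Γ₀, C₀) ∈ Phi enc X n →
        ∀ (Γ : Str) (C : Fm), tauStr enc Γ = Γ₀ → tau enc C = C₀ →
          Der sys8 ∅ Γ C) ∧
    (∀ A : Fm, Der sys8 ∅ (.leaf (.bang A)) A) ∧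
    (∀ A : Fm, Der sys8 ∅ (.leaf (.bang A)) (.tens (.bang A) (.bang A))) ∧
    (∀ A : Fm, Der sys8 ∅ (.leaf (.bang A)) .one) ∧
    (∀ A B : Fm, Der sys8 ∅ (.leaf (.bang A)) B →
        Der sys8 ∅ (.leaf (.bang A)) (.bang B)) := by
  refine ⟨?_, .bang_self rfl, .bang_tens_bang rfl, .bang_one rfl, fun _ _ h => .bangR4 rfl h⟩
  rintro X n _ _ hmem Γ C rfl rfl
  have h := der_untau_of_mem_phi henc X n _ _ hmem
  rwa [Str.subst_tauStr (untau_odd enc) (untau_even henc),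
    Fm.subst_tau (untau_odd enc) (untau_even henc)] at h
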